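/- arXiv:2402.05074 — 3 statements merged into one kernel-verified Lean document; each statement's English description precedes it below -/
import Mathlib

section
/- (Theorem 1, global discrimination.) Let d₁, d₂ ≥ 1, set d := d₁·d₂, and let B be a nonempty finite type. Let (p_b, ρ_b)_{b∈B} be an ensemble of density matrices indexed by Fin d₁ × Fin d₂, let (R_b)_{b∈B} be nonnegative reals such that each σ_b := (1+R_b)⁻¹ · (ρ_b + (R_b/d) · I) is separable, and let ℝ^M := max_{b∈B} R_b. Define P_G(η) := sSup { ∑_b p_b · Re Tr(M_b ρ_b) : (M_b)_{b∈B} a POVM } and P_G(ε) := sSup { ∑_b p_b · Re Tr(M_b σ_b) : (M_b)_{b∈B} a POVM }. Then P_G(η) ≤ (1 + ℝ^M) · P_G(ε). -/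
open Matrix
open scoped ComplexOrder Kronecker

/-- A density matrix: positive semidefinite with unit trace. -/
def IsDensityMatrix {n : Type*} [Fintype n] [DecidableEq n] (ρ : Matrix n n ℂ) : Prop :=
  ρ.PosSemidef ∧ ρ.trace = 1

/-- A POVM: a family of positive semidefinite matrices summing to the identity. -/
def IsPOVM {n B : Type*} [Fintype n] [DecidableEq n] [Fintype B]
    (M : B → Matrix n n ℂ) : Prop :=
  (∀ b, (M b).PosSemidef) ∧ ∑ b, M b = 1

/-- A bipartite state is separable if it is a convex combination of product
density matrices. -/
def IsSepState {d₁ d₂ : ℕ}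
    (ρ : Matrix (Fin d₁ × Fin d₂) (Fin d₁ × Fin d₂) ℂ) : Prop :=
  ρ ∈ convexHull ℝ { X | ∃ A : Matrix (Fin d₁) (Fin d₁) ℂ,
    ∃ C : Matrix (Fin d₂) (Fin d₂) ℂ,
      IsDensityMatrix A ∧ IsDensityMatrix C ∧ X = A ⊗ₖ C }

/-!
The noise term `(R_b / d) • 1` is positive semidefinite, so in the Loewner order
`ρ_b ≤ (1 + R_b) • σ_b ≤ (1 + R^M) • σ_b`. Pairing with a positive POVM element is monotone in
this order, hence every measurement succeeds on the ensemble `ρ` with probability at most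
`1 + R^M` times its success probability on `σ`; now take suprema.
-/

open scoped MatrixOrder

namespace Matrix

variable {𝕜 n : Type*} [RCLike 𝕜] [Fintype n]

lemma PosSemidef.trace_mul_nonneg {A B : Matrix n n 𝕜} (hA : A.PosSemidef) (hB : B.PosSemidef) :
    0 ≤ (A * B).trace := by
  classical
  obtain ⟨X, rfl⟩ := CStarAlgebra.nonneg_iff_eq_star_mul_self.mp hA.nonneg
  rw [Matrix.mul_assoc, trace_mul_comm, star_eq_conjTranspose]
  exact (hB.mul_mul_conjTranspose_same X).trace_nonneg

lemma trace_mul_le_trace_mul_of_le {M A B : Matrix n n 𝕜} (hM : M.PosSemidef) (hAB : A ≤ B) :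
    (M * A).trace ≤ (M * B).trace := by
  simpa [Matrix.mul_sub, trace_sub] using hM.trace_mul_nonneg (le_iff.mp hAB)

lemma re_trace_mul_le_of_le {M A B : Matrix n n ℂ} (hM : M.PosSemidef) (hAB : A ≤ B) :
    ((M * A).trace).re ≤ ((M * B).trace).re :=
  (Complex.le_def.mp (trace_mul_le_trace_mul_of_le hM hAB)).1

end Matrix

section Discrimination

variable {n B : Type*} [Fintype n] [DecidableEq n] [Fintype B]

lemma IsPOVM.le_one {M : B → Matrix n n ℂ} (hM : IsPOVM M) (b : B) : M b ≤ 1 :=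
  hM.2 ▸ Finset.single_le_sum (fun c _ => (hM.1 c).nonneg) (Finset.mem_univ b)

def successProb (p : B → ℝ) (M ρ : B → Matrix n n ℂ) : ℝ :=
  ∑ b, p b * ((M b * ρ b).trace).re

noncomputable def optimalSuccessProb (p : B → ℝ) (ρ : B → Matrix n n ℂ) : ℝ :=
  sSup {x : ℝ | ∃ M : B → Matrix n n ℂ, IsPOVM M ∧ x = successProb p M ρ}

variable {p : B → ℝ} {ρ σ : B → Matrix n n ℂ}

lemma successProb_nonneg (hp : ∀ b, 0 ≤ p b) (hρ : ∀ b, 0 ≤ ρ b) {M : B → Matrix n n ℂ}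
    (hM : IsPOVM M) : 0 ≤ successProb p M ρ :=
  Finset.sum_nonneg fun b _ => mul_nonneg (hp b)
    (Complex.le_def.mp ((hM.1 b).trace_mul_nonneg (hρ b).posSemidef)).1

lemma successProb_le (hp : ∀ b, 0 ≤ p b) (hρ : ∀ b, 0 ≤ ρ b) {M : B → Matrix n n ℂ}
    (hM : IsPOVM M) : successProb p M ρ ≤ ∑ b, p b * ((ρ b).trace).re := by
  refine Finset.sum_le_sum fun b _ => mul_le_mul_of_nonneg_left ?_ (hp b)
  simpa [trace_mul_comm (M b)] using re_trace_mul_le_of_le (hρ b).posSemidef (hM.le_one b)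

lemma bddAbove_successProb (hp : ∀ b, 0 ≤ p b) (hρ : ∀ b, 0 ≤ ρ b) :
    BddAbove {x : ℝ | ∃ M : B → Matrix n n ℂ, IsPOVM M ∧ x = successProb p M ρ} := by
  refine ⟨∑ b, p b * ((ρ b).trace).re, ?_⟩
  rintro x ⟨M, hM, rfl⟩
  exact successProb_le hp hρ hM

lemma successProb_le_mul {c : ℝ} (hp : ∀ b, 0 ≤ p b) (hρσ : ∀ b, ρ b ≤ c • σ b)
    {M : B → Matrix n n ℂ} (hM : IsPOVM M) : successProb p M ρ ≤ c * successProb p M σ := by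
  rw [successProb, successProb, Finset.mul_sum]
  refine Finset.sum_le_sum fun b _ => ?_
  have := re_trace_mul_le_of_le (hM.1 b) (hρσ b)
  rw [Matrix.mul_smul, trace_smul, Complex.smul_re, smul_eq_mul] at this
  exact (mul_le_mul_of_nonneg_left this (hp b)).trans_eq (mul_left_comm _ _ _)

lemma optimalSuccessProb_le_mul {c : ℝ} (hc : 0 ≤ c) (hp : ∀ b, 0 ≤ p b) (hσ : ∀ b, 0 ≤ σ b)
    (hρσ : ∀ b, ρ b ≤ c • σ b) : optimalSuccessProb p ρ ≤ c * optimalSuccessProb p σ := by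
  refine Real.sSup_le ?_ (mul_nonneg hc (Real.sSup_nonneg ?_))
  · rintro x ⟨M, hM, rfl⟩
    exact (successProb_le_mul hp hρσ hM).trans
      (mul_le_mul_of_nonneg_left (le_csSup (bddAbove_successProb hp hσ) ⟨M, hM, rfl⟩) hc)
  · rintro x ⟨M, hM, rfl⟩
    exact successProb_nonneg hp hσ hM

end Discrimination

theorem stmt1_general {d₁ d₂ : ℕ}
    {B : Type*} [Fintype B] [Nonempty B]
    (p : B → ℝ) (ρ : B → Matrix (Fin d₁ × Fin d₂) (Fin d₁ × Fin d₂) ℂ)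
    (hp : ∀ b, 0 ≤ p b)
    (hρ : ∀ b, IsDensityMatrix (ρ b))
    (R : B → ℝ) (hR : ∀ b, 0 ≤ R b)
    (σ : B → Matrix (Fin d₁ × Fin d₂) (Fin d₁ × Fin d₂) ℂ)
    (hσ : ∀ b, σ b = ((1 + R b)⁻¹ : ℝ) •
      (ρ b + ((R b / (d₁ * d₂) : ℝ)) • (1 : Matrix (Fin d₁ × Fin d₂) (Fin d₁ × Fin d₂) ℂ))) :
    sSup { x : ℝ | ∃ M : B → Matrix (Fin d₁ × Fin d₂) (Fin d₁ × Fin d₂) ℂ,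
        IsPOVM M ∧ x = ∑ b, p b * ((M b * ρ b).trace).re } ≤
      (1 + Finset.univ.sup' Finset.univ_nonempty R) *
        sSup { x : ℝ | ∃ M : B → Matrix (Fin d₁ × Fin d₂) (Fin d₁ × Fin d₂) ℂ,
          IsPOVM M ∧ x = ∑ b, p b * ((M b * σ b).trace).re } := by
  set RM := Finset.univ.sup' Finset.univ_nonempty R
  have hRM (b : B) : R b ≤ RM := Finset.le_sup' R (Finset.mem_univ b)
  have hnoise (b : B) : 0 ≤ (R b / (d₁ * d₂) : ℝ) • (1 : Matrix (Fin d₁ × Fin d₂) _ ℂ) :=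
    (PosSemidef.one.smul (div_nonneg (hR b) (by positivity))).nonneg
  have hσ_nonneg (b : B) : 0 ≤ σ b := by
    rw [hσ b]
    exact smul_nonneg (inv_nonneg.mpr (by linarith [hR b])) (add_nonneg (hρ b).1.nonneg (hnoise b))
  have hρ_le (b : B) : ρ b ≤ (1 + RM) • σ b :=
    calc ρ b ≤ ρ b + (R b / (d₁ * d₂) : ℝ) • 1 := le_add_of_nonneg_right (hnoise b)
      _ = (1 + R b) • σ b := by
        rw [hσ b, smul_smul, mul_inv_cancel₀ (by linarith [hR b]), one_smul]
      _ ≤ (1 + RM) • σ b := smul_le_smul_of_nonneg_right (by linarith [hRM b]) (hσ_nonneg b)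
  have hRM_nonneg : 0 ≤ 1 + RM := by
    linarith [hR (Classical.arbitrary B), hRM (Classical.arbitrary B)]
  show optimalSuccessProb p ρ ≤ (1 + RM) * optimalSuccessProb p σ
  exact optimalSuccessProb_le_mul hRM_nonneg hp hσ_nonneg hρ_le

theorem stmt1 {d₁ d₂ : ℕ} (hd₁ : 1 ≤ d₁) (hd₂ : 1 ≤ d₂)
    {B : Type*} [Fintype B] [Nonempty B]
    (p : B → ℝ) (ρ : B → Matrix (Fin d₁ × Fin d₂) (Fin d₁ × Fin d₂) ℂ)
    (hp : ∀ b, 0 ≤ p b) (hpsum : ∑ b, p b = 1)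
    (hρ : ∀ b, IsDensityMatrix (ρ b))
    (R : B → ℝ) (hR : ∀ b, 0 ≤ R b)
    (σ : B → Matrix (Fin d₁ × Fin d₂) (Fin d₁ × Fin d₂) ℂ)
    (hσ : ∀ b, σ b = ((1 + R b)⁻¹ : ℝ) •
      (ρ b + ((R b / (d₁ * d₂) : ℝ)) • (1 : Matrix (Fin d₁ × Fin d₂) (Fin d₁ × Fin d₂) ℂ)))
    (hσsep : ∀ b, IsSepState (σ b)) :
    sSup { x : ℝ | ∃ M : B → Matrix (Fin d₁ × Fin d₂) (Fin d₁ × Fin d₂) ℂ,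
        IsPOVM M ∧ x = ∑ b, p b * ((M b * ρ b).trace).re } ≤
      (1 + Finset.univ.sup' Finset.univ_nonempty R) *
        sSup { x : ℝ | ∃ M : B → Matrix (Fin d₁ × Fin d₂) (Fin d₁ × Fin d₂) ℂ,
          IsPOVM M ∧ x = ∑ b, p b * ((M b * σ b).trace).re } :=
  stmt1_general p ρ hp hρ R hR σ hσ
end

section
/- (Pointwise inequality underlying Theorem 2.) Let d ≥ 1 and let B be a nonempty finite type. Let (p_b, ρ_b)_{b∈B} be an ensemble of density matrices on ℂ^d, let (R_b)_{b∈B} be nonnegative reals, and let σ_b := (1+R_b)⁻¹ · (ρ_b + (R_b/d) · I). Then for every POVM (M_b)_{b∈B} on ℂ^d, (max_{b∈B} R_b · p_b) + ∑_{b∈B} p_b · Re Tr(M_b ρ_b) ≥ (1 + min_{b∈B} R_b) · ∑_{b∈B} p_b · Re Tr(M_b σ_b). -/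
open Matrix
open scoped ComplexOrder

namespace Matrix

variable {n : Type*} [Fintype n]

open scoped MatrixOrder in
theorem PosSemidef.re_trace_mul_nonneg {𝕜 : Type*} [RCLike 𝕜] {A B : Matrix n n 𝕜}
    (hA : A.PosSemidef) (hB : B.PosSemidef) : 0 ≤ RCLike.re (A * B).trace := by
  classical
  obtain ⟨C, rfl⟩ := CStarAlgebra.nonneg_iff_eq_star_mul_self.mp hB.nonneg
  rw [star_eq_conjTranspose, ← mul_assoc, trace_mul_cycle]
  exact (RCLike.nonneg_iff.mp (hA.mul_mul_conjTranspose_same C).trace_nonneg).1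

theorem re_trace_mul_smul_add_smul_one [DecidableEq n] (M ρ : Matrix n n ℂ) (c s : ℝ) :
    (M * (c • (ρ + s • (1 : Matrix n n ℂ)))).trace.re =
      c * ((M * ρ).trace.re + s * M.trace.re) := by
  simp only [Matrix.mul_smul, Matrix.mul_add, Matrix.mul_one, trace_smul, trace_add,
    Complex.real_smul, Complex.re_ofReal_mul, Complex.add_re]

end Matrix

theorem IsPOVM.sum_re_trace {n B : Type*} [Fintype n] [DecidableEq n] [Fintype B]
    {M : B → Matrix n n ℂ} (hM : IsPOVM M) : ∑ b, (M b).trace.re = Fintype.card n := by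
  rw [← Complex.re_sum, ← trace_sum, hM.2, trace_one]
  simp

theorem one_add_div_one_add_mul_le {I r p t x S : ℝ} (hI : 0 ≤ I) (hIr : I ≤ r) (hp : 0 ≤ p)
    (ht : 0 ≤ t) (hx : 0 ≤ x) (hS : r * p ≤ S) :
    (1 + I) / (1 + r) * (p * (t + r * x)) ≤ p * t + S * x := by
  have hfactor : (1 + I) / (1 + r) ≤ 1 := div_le_one_of_le₀ (by linarith) (by linarith)
  calc (1 + I) / (1 + r) * (p * (t + r * x))
      ≤ p * (t + r * x) := mul_le_of_le_one_left
        (mul_nonneg hp (add_nonneg ht (mul_nonneg (hI.trans hIr) hx))) hfactor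
    _ = p * t + r * p * x := by ring
    _ ≤ p * t + S * x := by gcongr

theorem stmt4_general {d : ℕ} {B : Type*} [Fintype B] [Nonempty B]
    (p : B → ℝ) (ρ : B → Matrix (Fin d) (Fin d) ℂ)
    (hp : ∀ b, 0 ≤ p b)
    (hρ : ∀ b, IsDensityMatrix (ρ b))
    (R : B → ℝ) (hR : ∀ b, 0 ≤ R b)
    (σ : B → Matrix (Fin d) (Fin d) ℂ)
    (hσ : ∀ b, σ b = ((1 + R b)⁻¹ : ℝ) •
      (ρ b + ((R b / d : ℝ)) • (1 : Matrix (Fin d) (Fin d) ℂ)))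
    (M : B → Matrix (Fin d) (Fin d) ℂ) (hM : IsPOVM M) :
    (Finset.univ.sup' Finset.univ_nonempty fun b => R b * p b) +
        ∑ b, p b * ((M b * ρ b).trace).re ≥
      (1 + Finset.univ.inf' Finset.univ_nonempty R) *
        ∑ b, p b * ((M b * σ b).trace).re := by
  set S := Finset.univ.sup' Finset.univ_nonempty fun b => R b * p b
  set I := Finset.univ.inf' Finset.univ_nonempty R
  set x : B → ℝ := fun b => (M b).trace.re / d
  have hI : 0 ≤ I := Finset.le_inf' _ _ fun b _ => hR b
  have hS : 0 ≤ S := by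
    obtain ⟨b⟩ := ‹Nonempty B›
    exact Finset.le_sup'_of_le _ (Finset.mem_univ b) (mul_nonneg (hR b) (hp b))
  -- `d / d ≤ 1` holds also for `d = 0`
  have hx : ∑ b, x b ≤ 1 := by
    rw [← Finset.sum_div, hM.sum_re_trace, Fintype.card_fin]
    exact div_self_le_one _
  calc (1 + I) * ∑ b, p b * ((M b * σ b).trace).re
      = ∑ b, (1 + I) / (1 + R b) * (p b * ((M b * ρ b).trace.re + R b * x b)) := by
        rw [Finset.mul_sum]
        refine Finset.sum_congr rfl fun b _ => ?_
        rw [hσ b, re_trace_mul_smul_add_smul_one]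
        ring
    _ ≤ ∑ b, (p b * (M b * ρ b).trace.re + S * x b) := by
        refine Finset.sum_le_sum fun b _ => one_add_div_one_add_mul_le hI
          (Finset.inf'_le _ (Finset.mem_univ b)) (hp b) ((hM.1 b).re_trace_mul_nonneg (hρ b).1)
          (div_nonneg (hM.1 b).trace_nonneg.1 d.cast_nonneg) ?_
        exact Finset.le_sup' (fun b => R b * p b) (Finset.mem_univ b)
    _ = ∑ b, p b * (M b * ρ b).trace.re + S * ∑ b, x b := by
        rw [Finset.sum_add_distrib, Finset.mul_sum]
    _ ≤ S + ∑ b, p b * (M b * ρ b).trace.re := by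
        linarith [mul_le_of_le_one_right hS hx]

theorem stmt4 {d : ℕ} (hd : 1 ≤ d) {B : Type*} [Fintype B] [Nonempty B]
    (p : B → ℝ) (ρ : B → Matrix (Fin d) (Fin d) ℂ)
    (hp : ∀ b, 0 ≤ p b) (hpsum : ∑ b, p b = 1)
    (hρ : ∀ b, IsDensityMatrix (ρ b))
    (R : B → ℝ) (hR : ∀ b, 0 ≤ R b)
    (σ : B → Matrix (Fin d) (Fin d) ℂ)
    (hσ : ∀ b, σ b = ((1 + R b)⁻¹ : ℝ) •
      (ρ b + ((R b / d : ℝ)) • (1 : Matrix (Fin d) (Fin d) ℂ)))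
    (M : B → Matrix (Fin d) (Fin d) ℂ) (hM : IsPOVM M) :
    (Finset.univ.sup' Finset.univ_nonempty fun b => R b * p b) +
        ∑ b, p b * ((M b * ρ b).trace).re ≥
      (1 + Finset.univ.inf' Finset.univ_nonempty R) *
        ∑ b, p b * ((M b * σ b).trace).re :=
  stmt4_general p ρ hp hρ R hR σ hσ M hM
end

section
/- (Theorem 3: more indistinguishability with less entanglement, equal robustness case.) Let d ≥ 1, let ρ₁, ρ₂ be density matrices on ℂ^d, let p₁, p₂ ≥ 0 with p₁ + p₂ = 1, let R ≥ 0, and define σᵢ := (1+R)⁻¹ · (ρᵢ + (R/d) · I) for i = 1, 2. Then ‖p₁·σ₁ − p₂·σ₂‖₁ ≤ ‖p₁·ρ₁ − p₂·ρ₂‖₁; equivalently, the Helstrom success probability (1 + ‖p₁σ₁ − p₂σ₂‖₁)/2 of globally discriminating σ₁ from σ₂ is at most the Helstrom success probability (1 + ‖p₁ρ₁ − p₂ρ₂‖₁)/2 of globally discriminating ρ₁ from ρ₂. -/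
open Matrix
open scoped ComplexOrder

/-- The positive semidefinite square root of a positive semidefinite matrix (removed from
Mathlib; restored with its former definition). -/
noncomputable def Matrix.PosSemidef.sqrt {n : Type*} {𝕜 : Type*} [Fintype n] [DecidableEq n]
    [RCLike 𝕜] {A : Matrix n n 𝕜} (hA : A.PosSemidef) : Matrix n n 𝕜 :=
  hA.1.eigenvectorUnitary.1 * diagonal ((↑) ∘ (fun i => √(hA.1.eigenvalues i))) *
    (star hA.1.eigenvectorUnitary : Matrix n n 𝕜)

/-- The trace norm of a complex matrix: the trace of the positive semidefinite
square root of `Aᴴ * A`. -/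
noncomputable def traceNorm {n : Type*} [Fintype n] [DecidableEq n]
    (A : Matrix n n ℂ) : ℝ :=
  ((Matrix.posSemidef_conjTranspose_mul_self A).sqrt.trace).re

/-!
With `X = p₁ • ρ₁ - p₂ • ρ₂` one has `p₁ • σ₁ - p₂ • σ₂ = (1 + R)⁻¹ • (X + (R * Tr X / d) • 1)`.
In an eigenbasis of `X` this is diagonal with entries `(λᵢ + R * Tr X / d) / (1 + R)`, so its
trace norm is at most `(‖X‖₁ + R * |Tr X|) / (1 + R) ≤ ‖X‖₁`, since `|Tr X| = |∑ λᵢ| ≤ ‖X‖₁`.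
-/

open scoped MatrixOrder Matrix.Norms.L2Operator

namespace Matrix

variable {n : Type*} [Fintype n] [DecidableEq n]

lemma PosSemidef.sqrt_eq_cfcSqrt {A : Matrix n n ℂ} (hA : A.PosSemidef) :
    hA.sqrt = CFC.sqrt A := by
  rw [CFC.sqrt_eq_cfc, cfc_nnreal_eq_real _ A, hA.1.cfc_eq, IsHermitian.cfc, PosSemidef.sqrt]
  congr 3
  ext i
  simp [hA.eigenvalues_nonneg i]

lemma traceNorm_eq_re_trace_abs (A : Matrix n n ℂ) : traceNorm A = (CFC.abs A).trace.re := by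
  rw [traceNorm, PosSemidef.sqrt_eq_cfcSqrt, CFC.abs, star_eq_conjTranspose]

lemma trace_conjStarAlgAut (U : unitary (Matrix n n ℂ)) (B : Matrix n n ℂ) :
    (Unitary.conjStarAlgAut ℂ _ U B).trace = B.trace := by
  rw [Unitary.conjStarAlgAut_apply, trace_mul_cycle, Unitary.coe_star_mul_self, one_mul]

lemma IsHermitian.traceNorm_cfc {A : Matrix n n ℂ} (hA : A.IsHermitian) (f : ℝ → ℝ) :
    traceNorm (cfc f A) = ∑ i, |f (hA.eigenvalues i)| := by
  rw [traceNorm_eq_re_trace_abs, CFC.abs_eq_cfc_norm (cfc f A),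
    ← cfc_comp' _ _ _ (hf := A.finite_real_spectrum.continuousOn _), hA.cfc_eq,
    IsHermitian.cfc, trace_conjStarAlgAut, trace_diagonal]
  simp

lemma IsHermitian.traceNorm_eq_sum_abs_eigenvalues {A : Matrix n n ℂ} (hA : A.IsHermitian) :
    traceNorm A = ∑ i, |hA.eigenvalues i| := by
  simpa only [cfc_id ℝ A, id] using hA.traceNorm_cfc id

lemma IsHermitian.abs_re_trace_le_traceNorm {A : Matrix n n ℂ} (hA : A.IsHermitian) :
    |A.trace.re| ≤ traceNorm A := by
  rw [hA.trace_eq_sum_eigenvalues, hA.traceNorm_eq_sum_abs_eigenvalues]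
  simpa using Finset.abs_sum_le_sum_abs hA.eigenvalues Finset.univ

lemma IsHermitian.traceNorm_smul_add_smul_one_le {A : Matrix n n ℂ} (hA : A.IsHermitian)
    (r c : ℝ) : traceNorm (r • A + c • 1) ≤ |r| * traceNorm A + |c| * Fintype.card n := by
  have hcfc : r • A + c • 1 = cfc (fun x => r * x + c) A := by
    rw [cfc_add .., cfc_const_mul .., cfc_id' .., cfc_const c A, Algebra.algebraMap_eq_smul_one]
  calc traceNorm (r • A + c • 1) = ∑ i, |r * hA.eigenvalues i + c| := by
        rw [hcfc, hA.traceNorm_cfc]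
    _ ≤ ∑ i, (|r| * |hA.eigenvalues i| + |c|) := by
        gcongr with i
        exact (abs_add_le _ _).trans_eq (by rw [abs_mul])
    _ = |r| * traceNorm A + |c| * Fintype.card n := by
        simp [Finset.sum_add_distrib, Finset.mul_sum, hA.traceNorm_eq_sum_abs_eigenvalues,
          mul_comm]

lemma IsHermitian.traceNorm_depolarize_le [Nonempty n] {A : Matrix n n ℂ} (hA : A.IsHermitian)
    {R : ℝ} (hR : 0 ≤ R) :
    traceNorm ((1 + R)⁻¹ • (A + (R * A.trace.re / Fintype.card n) • 1)) ≤ traceNorm A := by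
  have hR₁ : 0 < 1 + R := by linarith
  rw [smul_add, smul_smul]
  calc _ ≤ |(1 + R)⁻¹| * traceNorm A + |(1 + R)⁻¹ * (R * A.trace.re / Fintype.card n)| *
        Fintype.card n := hA.traceNorm_smul_add_smul_one_le _ _
    _ = (1 + R)⁻¹ * (traceNorm A + R * |A.trace.re|) := by
      rw [abs_mul, abs_div, abs_mul, abs_of_pos (inv_pos.2 hR₁), abs_of_nonneg hR, Nat.abs_cast,
        mul_assoc, div_mul_cancel₀ _ (Nat.cast_ne_zero.2 Fintype.card_ne_zero), mul_add]
    _ ≤ (1 + R)⁻¹ * (traceNorm A + R * traceNorm A) := by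
      gcongr
      exact hA.abs_re_trace_le_traceNorm
    _ = traceNorm A := by field_simp

end Matrix

theorem stmt6_general {d : ℕ} (hd : 1 ≤ d)
    (ρ₁ ρ₂ : Matrix (Fin d) (Fin d) ℂ)
    (hρ₁ : IsDensityMatrix ρ₁) (hρ₂ : IsDensityMatrix ρ₂)
    (p₁ p₂ : ℝ)
    (R : ℝ) (hR : 0 ≤ R)
    (σ₁ σ₂ : Matrix (Fin d) (Fin d) ℂ)
    (hσ₁ : σ₁ = ((1 + R)⁻¹ : ℝ) • (ρ₁ + ((R / d : ℝ)) • (1 : Matrix (Fin d) (Fin d) ℂ)))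
    (hσ₂ : σ₂ = ((1 + R)⁻¹ : ℝ) • (ρ₂ + ((R / d : ℝ)) • (1 : Matrix (Fin d) (Fin d) ℂ))) :
    traceNorm (p₁ • σ₁ - p₂ • σ₂) ≤ traceNorm (p₁ • ρ₁ - p₂ • ρ₂) ∧
      (1 + traceNorm (p₁ • σ₁ - p₂ • σ₂)) / 2 ≤
        (1 + traceNorm (p₁ • ρ₁ - p₂ • ρ₂)) / 2 := by
  have : NeZero d := ⟨by omega⟩
  set X := p₁ • ρ₁ - p₂ • ρ₂
  have hX : X.IsHermitian :=
    (hρ₁.1.1.smul (IsSelfAdjoint.all p₁)).sub (hρ₂.1.1.smul (IsSelfAdjoint.all p₂))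
  have htr : X.trace.re = p₁ - p₂ := by
    simp [X, Matrix.trace_sub, Matrix.trace_smul, hρ₁.2, hρ₂.2]
  have hdiff : p₁ • σ₁ - p₂ • σ₂ =
      (1 + R)⁻¹ • (X + (R * X.trace.re / Fintype.card (Fin d)) • 1) := by
    rw [htr, Fintype.card_fin, hσ₁, hσ₂]
    module
  have hmain : traceNorm (p₁ • σ₁ - p₂ • σ₂) ≤ traceNorm X :=
    hdiff ▸ hX.traceNorm_depolarize_le hR
  exact ⟨hmain, by linarith⟩

theorem stmt6 {d : ℕ} (hd : 1 ≤ d)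
    (ρ₁ ρ₂ : Matrix (Fin d) (Fin d) ℂ)
    (hρ₁ : IsDensityMatrix ρ₁) (hρ₂ : IsDensityMatrix ρ₂)
    (p₁ p₂ : ℝ) (hp₁ : 0 ≤ p₁) (hp₂ : 0 ≤ p₂) (hp : p₁ + p₂ = 1)
    (R : ℝ) (hR : 0 ≤ R)
    (σ₁ σ₂ : Matrix (Fin d) (Fin d) ℂ)
    (hσ₁ : σ₁ = ((1 + R)⁻¹ : ℝ) • (ρ₁ + ((R / d : ℝ)) • (1 : Matrix (Fin d) (Fin d) ℂ)))
    (hσ₂ : σ₂ = ((1 + R)⁻¹ : ℝ) • (ρ₂ + ((R / d : ℝ)) • (1 : Matrix (Fin d) (Fin d) ℂ))) :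
    traceNorm (p₁ • σ₁ - p₂ • σ₂) ≤ traceNorm (p₁ • ρ₁ - p₂ • ρ₂) ∧
      (1 + traceNorm (p₁ • σ₁ - p₂ • σ₂)) / 2 ≤
        (1 + traceNorm (p₁ • ρ₁ - p₂ • ρ₂)) / 2 :=
  stmt6_general hd ρ₁ ρ₂ hρ₁ hρ₂ p₁ p₂ R hR σ₁ σ₂ hσ₁ hσ₂
end
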